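/- Let Ω be a set, Σ : Ω × Ω → ℝ arbitrary, n ≥ 1, and P : Fin(n+1) → Ω. Then the squared length F_n(P) = (P⃗ⁿ.P⃗ⁿ) is invariant with respect to permutation of any of its points: for every permutation π of {0,1,…,n}, F_n(P ∘ π) = F_n(P). -/

import Mathlib

/-- The scalar Σ-product `(P⃗ⁿ.Q⃗ⁿ)` of two `n`th order multivectors: the determinant
of the `n × n` matrix with entries `(P₀Pᵢ.Q₀Qₖ)`. -/
noncomputable def msp {Ω : Type} (W : Ω → Ω → ℝ) (n : ℕ) (P Q : Fin (n + 1) → Ω) : ℝ :=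
  Matrix.det (Matrix.of fun i k : Fin n =>
    W (P 0) (Q k.succ) + W (P i.succ) (Q 0) - W (P 0) (Q 0) - W (P i.succ) (Q k.succ))

namespace MspAux

open Matrix Finset

/-- Indicator vector of a point of `Fin (n+1)`: zero for `0`, standard basis otherwise. -/
def gZ (n : ℕ) (a : Fin (n + 1)) : Fin n → ℤ := fun l => if a = l.succ then 1 else 0

/-- The change-of-base matrix associated to a permutation. -/
def CZ (n : ℕ) (π : Equiv.Perm (Fin (n + 1))) : Matrix (Fin n) (Fin n) ℤ :=
  Matrix.of fun i l => gZ n (π i.succ) l - gZ n (π 0) l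

lemma gZ_zero (n : ℕ) (l : Fin n) : gZ n 0 l = 0 := by
  simp [gZ, (Fin.succ_ne_zero l).symm]

lemma sum_gZ (n : ℕ) (a : Fin (n + 1)) (f : Fin n → ℤ) :
    ∑ m, gZ n a m * f m = Fin.cases 0 f a := by
  induction a using Fin.cases with
  | zero => simp [gZ_zero]
  | succ j => simp [gZ, Fin.succ_inj]

lemma CZ_mul (n : ℕ) (σ τ : Equiv.Perm (Fin (n + 1))) :
    CZ n σ * CZ n τ = CZ n (τ * σ) := by
  ext i l
  have key : ∀ a : Fin (n + 1),
      ∑ m, gZ n a m * (gZ n (τ m.succ) l - gZ n (τ 0) l) = gZ n (τ a) l - gZ n (τ 0) l := by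
    intro a
    rw [sum_gZ]
    induction a using Fin.cases with
    | zero => simp
    | succ j => simp
  simp only [CZ, Matrix.mul_apply, Matrix.of_apply]
  have expand : ∀ i' : Fin n,
      ∑ m, (gZ n (σ i'.succ) m - gZ n (σ 0) m) * (gZ n (τ m.succ) l - gZ n (τ 0) l)
        = gZ n (τ (σ i'.succ)) l - gZ n (τ (σ 0)) l := by
    intro i'
    have h1 := key (σ i'.succ)
    have h2 := key (σ 0)
    calc ∑ m, (gZ n (σ i'.succ) m - gZ n (σ 0) m) * (gZ n (τ m.succ) l - gZ n (τ 0) l)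
        = (∑ m, gZ n (σ i'.succ) m * (gZ n (τ m.succ) l - gZ n (τ 0) l))
          - ∑ m, gZ n (σ 0) m * (gZ n (τ m.succ) l - gZ n (τ 0) l) := by
          rw [← Finset.sum_sub_distrib]; congr 1; ext m; ring
      _ = gZ n (τ (σ i'.succ)) l - gZ n (τ (σ 0)) l := by rw [h1, h2]; ring
  simpa [Equiv.Perm.mul_apply] using expand i

lemma CZ_one (n : ℕ) : CZ n 1 = 1 := by
  ext i l
  simp [CZ, gZ, gZ_zero, Fin.succ_inj, Matrix.one_apply, eq_comm, Fin.succ_ne_zero]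

lemma isUnit_det_CZ (n : ℕ) (π : Equiv.Perm (Fin (n + 1))) : IsUnit (CZ n π).det := by
  have h : CZ n π * CZ n π⁻¹ = 1 := by
    rw [CZ_mul, inv_mul_cancel, CZ_one]
  have hdet : (CZ n π).det * (CZ n π⁻¹).det = 1 := by
    rw [← Matrix.det_mul, h, Matrix.det_one]
  exact IsUnit.of_mul_eq_one _ hdet

lemma det_CZ_sq (n : ℕ) (π : Equiv.Perm (Fin (n + 1))) :
    (CZ n π).det * (CZ n π).det = 1 := by
  rcases Int.isUnit_iff.mp (isUnit_det_CZ n π) with h | h <;> rw [h] <;> norm_num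

end MspAux

open MspAux Matrix Finset in
/-- The squared length `F_n(P) = (P⃗ⁿ.P⃗ⁿ)` of an `n`th order multivector is invariant
with respect to any permutation of its points. -/
theorem squared_length_permutation_invariant
    (Ω : Type) (W : Ω → Ω → ℝ) (n : ℕ) (hn : 1 ≤ n)
    (P : Fin (n + 1) → Ω) (π : Equiv.Perm (Fin (n + 1))) :
    msp W n (P ∘ π) (P ∘ π) = msp W n P P := by
  classical
  -- the real change-of-base matrix
  set C : Matrix (Fin n) (Fin n) ℝ := (CZ n π).map (Int.cast) with hC
  -- the matrix for P
  set M : Matrix (Fin n) (Fin n) ℝ := Matrix.of (fun i k : Fin n =>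
    W (P 0) (P k.succ) + W (P i.succ) (P 0) - W (P 0) (P 0) - W (P i.succ) (P k.succ))
    with hM
  -- the extended bilinear form
  set F : Fin (n + 1) → Fin (n + 1) → ℝ := fun a b =>
    W (P 0) (P b) + W (P a) (P 0) - W (P 0) (P 0) - W (P a) (P b) with hF
  have hF0 : ∀ b, F 0 b = 0 := fun b => by simp only [hF]; ring
  have hFa0 : ∀ a, F a 0 = 0 := fun a => by simp only [hF]; ring
  -- bilinear evaluation of F through the indicator vectors
  have hgR : ∀ (a : Fin (n + 1)) (f : Fin n → ℝ),
      ∑ m, ((gZ n a m : ℝ)) * f m = Fin.cases 0 f a := by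
    intro a f
    induction a using Fin.cases with
    | zero => simp [gZ_zero]
    | succ j => simp [gZ, Fin.succ_inj]
  have hsumF : ∀ a b : Fin (n + 1),
      ∑ l, ∑ m, (gZ n a l : ℝ) * M l m * (gZ n b m : ℝ) = F a b := by
    intro a b
    have : ∀ l, ∑ m, (gZ n a l : ℝ) * M l m * (gZ n b m : ℝ)
        = (gZ n a l : ℝ) * ∑ m, ((gZ n b m : ℝ) * M l m) := by
      intro l; rw [Finset.mul_sum]; congr 1; ext m; ring
    simp only [this]
    induction a using Fin.cases with
    | zero => simp [gZ_zero, hF0]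
    | succ i =>
      have : ∀ l : Fin n, (gZ n i.succ l : ℝ) * ∑ m, ((gZ n b m : ℝ) * M l m)
          = (gZ n i.succ l : ℝ) * Fin.cases 0 (fun m => M l m) b := by
        intro l; rw [hgR b (fun m => M l m)]
      simp only [this]
      have hcol : ∑ l, (gZ n i.succ l : ℝ) * Fin.cases 0 (fun m => M l m) b
          = Fin.cases 0 (fun l => Fin.cases 0 (fun m => M l m) b) i.succ :=
        hgR i.succ _
      rw [hcol]
      induction b using Fin.cases with
      | zero => simp [hFa0]
      | succ k => simp [hM, hF]
  -- the matrix for P ∘ π equals C * M * Cᵀ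
  have hmat : (Matrix.of fun i k : Fin n =>
      W ((P ∘ π) 0) ((P ∘ π) k.succ) + W ((P ∘ π) i.succ) ((P ∘ π) 0)
        - W ((P ∘ π) 0) ((P ∘ π) 0) - W ((P ∘ π) i.succ) ((P ∘ π) k.succ))
      = C * M * Cᵀ := by
    ext i k
    have hCentry : ∀ (i' l : Fin n), C i' l = (gZ n (π i'.succ) l : ℝ) - (gZ n (π 0) l : ℝ) := by
      intro i' l; simp [hC, CZ, Matrix.map_apply]
    have : (C * M * Cᵀ) i k
        = ∑ l, ∑ m, C i l * M l m * C k m := by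
      simp only [Matrix.mul_apply, Matrix.transpose_apply, Finset.sum_mul]
      rw [Finset.sum_comm]
    rw [this]
    have expand : ∀ l m, C i l * M l m * C k m
        = (gZ n (π i.succ) l : ℝ) * M l m * (gZ n (π k.succ) m : ℝ)
          - (gZ n (π i.succ) l : ℝ) * M l m * (gZ n (π 0) m : ℝ)
          - (gZ n (π 0) l : ℝ) * M l m * (gZ n (π k.succ) m : ℝ)
          + (gZ n (π 0) l : ℝ) * M l m * (gZ n (π 0) m : ℝ) := by
      intro l m; rw [hCentry, hCentry]; ring
    have : ∑ l, ∑ m, C i l * M l m * C k m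
        = F (π i.succ) (π k.succ) - F (π i.succ) (π 0) - F (π 0) (π k.succ) + F (π 0) (π 0) := by
      rw [← hsumF (π i.succ) (π k.succ), ← hsumF (π i.succ) (π 0),
          ← hsumF (π 0) (π k.succ), ← hsumF (π 0) (π 0)]
      simp only [expand]
      rw [← Finset.sum_sub_distrib, ← Finset.sum_sub_distrib, ← Finset.sum_add_distrib]
      congr 1; ext l
      rw [← Finset.sum_sub_distrib, ← Finset.sum_sub_distrib, ← Finset.sum_add_distrib]
    rw [this]
    simp only [hF, Function.comp_apply, Matrix.of_apply]
    ring
  have hdetC : C.det * C.det = 1 := by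
    have : C.det = ((CZ n π).det : ℝ) := by
      rw [hC]
      exact (RingHom.map_det (Int.castRingHom ℝ) (CZ n π)).symm
    rw [this, ← Int.cast_mul, det_CZ_sq, Int.cast_one]
  calc msp W n (P ∘ π) (P ∘ π)
      = (C * M * Cᵀ).det := by rw [msp, hmat]
    _ = C.det * M.det * C.det := by rw [Matrix.det_mul, Matrix.det_mul, Matrix.det_transpose]
    _ = M.det := by rw [mul_comm C.det M.det, mul_assoc, hdetC, mul_one]
    _ = msp W n P P := rfl
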